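/- Bellman backup contraction in L2 of the occupancy measure: For any policy π of a finite discounted MDP and any function f : S×A → ℝ, E_{(s,a)∼d^π}[((T^π f)(s,a) − Q^π(s,a))²] ≤ γ · E_{(s,a)∼d^π}[(f(s,a) − Q^π(s,a))²]. -/

import Mathlib

open Finset

structure FinMDP (S A : Type*) [Fintype S] [Fintype A] where
  P : S → A → S → ℝ
  P_nonneg : ∀ s a s', 0 ≤ P s a s'
  P_sum : ∀ s a, ∑ s', P s a s' = 1
  r : S → A → ℝ
  r_nonneg : ∀ s a, 0 ≤ r s a
  r_le_one : ∀ s a, r s a ≤ 1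
  disc : ℝ
  disc_pos : 0 < disc
  disc_lt_one : disc < 1
  init : S → ℝ
  init_nonneg : ∀ s, 0 ≤ init s
  init_sum : ∑ s, init s = 1

variable {S A : Type*} [Fintype S] [Fintype A] [Nonempty S] [Nonempty A]

/-- A policy assigns to each state a probability mass function over actions. -/
def IsPolicy (π : S → A → ℝ) : Prop :=
  (∀ s a, 0 ≤ π s a) ∧ ∀ s, ∑ a, π s a = 1

/-- The Bellman operator `T^π`. -/
noncomputable def FinMDP.bellman (M : FinMDP S A) (π f : S → A → ℝ) (s : S) (a : A) : ℝ :=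
  M.r s a + M.disc * ∑ s', M.P s a s' * ∑ a', π s' a' * f s' a'

/-- `Q` is the action-value function of `π`, i.e. satisfies the Bellman equation. -/
def FinMDP.IsQ (M : FinMDP S A) (π Q : S → A → ℝ) : Prop :=
  ∀ s a, Q s a = M.bellman π Q s a

/-- The state value `V^π(s)` induced by a `Q`-function. -/
noncomputable def vOf (π Q : S → A → ℝ) (s : S) : ℝ := ∑ a, π s a * Q s a

/-- The scalar value `V^π = E_{s ∼ μ₀}[V^π(s)]`. -/
noncomputable def FinMDP.scalarV (M : FinMDP S A) (π Q : S → A → ℝ) : ℝ :=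
  ∑ s, M.init s * vOf π Q s

/-- Distribution of the state at time `t` under policy `π`. -/
noncomputable def FinMDP.stateDist (M : FinMDP S A) (π : S → A → ℝ) : ℕ → S → ℝ
  | 0 => M.init
  | (t + 1) => fun s' => ∑ s, ∑ a, FinMDP.stateDist M π t s * π s a * M.P s a s'

/-- The discounted occupancy measure `d^π(s,a) = (1-γ) ∑_t γ^t Pr^π(s_t = s, a_t = a)`. -/
noncomputable def FinMDP.occ (M : FinMDP S A) (π : S → A → ℝ) (s : S) (a : A) : ℝ :=
  (1 - M.disc) * ∑' t : ℕ, M.disc ^ t * M.stateDist π t s * π s a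

/-! With `g = f - Q` and `(P^π h)(s, a) = E_{s' ∼ P(·|s,a), a' ∼ π(·|s')}[h(s', a')]` (`nextValue`),
the Bellman equation for `Q` gives `T^π f - Q = γ P^π g`, and Jensen's inequality gives
`(P^π g)² ≤ P^π (g²)`. The occupancy measure satisfies the flow equation
`E_{d^π}[h] = (1 - γ) E_{μ₀, π}[h] + γ E_{d^π}[P^π h]`, so `γ E_{d^π}[P^π h] ≤ E_{d^π}[h]` for `h ≥ 0`;
with `h = g²` this absorbs one of the two factors `γ`. -/

theorem sq_sum_mul_le_sum_mul_sq {ι : Type*} (t : Finset ι) {w : ι → ℝ} (x : ι → ℝ)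
    (hw₀ : ∀ i ∈ t, 0 ≤ w i) (hw₁ : ∑ i ∈ t, w i = 1) :
    (∑ i ∈ t, w i * x i) ^ 2 ≤ ∑ i ∈ t, w i * x i ^ 2 := by
  simpa only [smul_eq_mul] using
    (even_two.convexOn_pow (𝕜 := ℝ)).map_sum_le hw₀ hw₁ (fun i _ => Set.mem_univ (x i))

namespace FinMDP

omit [Nonempty S] [Nonempty A]

variable (M : FinMDP S A) {π : S → A → ℝ}

noncomputable def nextValue (π h : S → A → ℝ) (s : S) (a : A) : ℝ :=
  ∑ s', M.P s a s' * vOf π h s'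

theorem bellman_eq_add_nextValue (π f : S → A → ℝ) (s : S) (a : A) :
    M.bellman π f s a = M.r s a + M.disc * M.nextValue π f s a :=
  rfl

theorem nextValue_sub (π f g : S → A → ℝ) (s : S) (a : A) :
    M.nextValue π (f - g) s a = M.nextValue π f s a - M.nextValue π g s a := by
  simp only [nextValue, vOf, Pi.sub_apply, mul_sub, Finset.sum_sub_distrib]

theorem bellman_sub_of_isQ {Q : S → A → ℝ} (hQ : M.IsQ π Q) (f : S → A → ℝ) (s : S) (a : A) :
    M.bellman π f s a - Q s a = M.disc * M.nextValue π (f - Q) s a := by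
  rw [hQ s a, bellman_eq_add_nextValue, bellman_eq_add_nextValue, nextValue_sub]
  ring

theorem sq_nextValue_le (hπ : IsPolicy π) (h : S → A → ℝ) (s : S) (a : A) :
    M.nextValue π h s a ^ 2 ≤ M.nextValue π (h ^ 2) s a :=
  calc M.nextValue π h s a ^ 2 ≤ ∑ s', M.P s a s' * vOf π h s' ^ 2 :=
        sq_sum_mul_le_sum_mul_sq _ _ (fun s' _ => M.P_nonneg s a s') (M.P_sum s a)
    _ ≤ M.nextValue π (h ^ 2) s a := by
        unfold nextValue
        gcongr with s' _
        · exact M.P_nonneg s a s'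
        · exact sq_sum_mul_le_sum_mul_sq _ _ (fun a' _ => hπ.1 s' a') (hπ.2 s')

theorem stateDist_nonneg (hπ : IsPolicy π) (t : ℕ) (s : S) : 0 ≤ M.stateDist π t s := by
  induction t generalizing s with
  | zero => exact M.init_nonneg s
  | succ t ih =>
    exact Finset.sum_nonneg fun s' _ => Finset.sum_nonneg fun a _ =>
      mul_nonneg (mul_nonneg (ih s') (hπ.1 s' a)) (M.P_nonneg s' a s)

theorem sum_stateDist_succ_mul (π h : S → A → ℝ) (t : ℕ) :
    ∑ s, M.stateDist π (t + 1) s * vOf π h s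
      = ∑ s, M.stateDist π t s * vOf π (M.nextValue π h) s := by
  calc ∑ s', M.stateDist π (t + 1) s' * vOf π h s'
      = ∑ s', ∑ s, ∑ a, M.stateDist π t s * π s a * (M.P s a s' * vOf π h s') := by
        simp only [stateDist, Finset.sum_mul, mul_assoc]
    _ = ∑ s, ∑ a, ∑ s', M.stateDist π t s * π s a * (M.P s a s' * vOf π h s') := by
        rw [Finset.sum_comm]
        exact Finset.sum_congr rfl fun s _ => Finset.sum_comm
    _ = ∑ s, M.stateDist π t s * vOf π (M.nextValue π h) s := by
        simp only [vOf, nextValue, Finset.mul_sum, mul_assoc]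

theorem sum_stateDist (hπ : IsPolicy π) (t : ℕ) : ∑ s, M.stateDist π t s = 1 := by
  induction t with
  | zero => exact M.init_sum
  | succ t ih =>
    have hone : vOf π (fun _ _ => (1 : ℝ)) = fun _ => 1 := funext fun s => by simp [vOf, hπ.2 s]
    have hnext : M.nextValue π (fun _ _ => 1) = fun _ _ => 1 :=
      funext₂ fun s a => by simp [nextValue, hone, M.P_sum s a]
    simpa [hone, hnext, ih] using M.sum_stateDist_succ_mul π (fun _ _ => 1) t

theorem stateDist_le_one (hπ : IsPolicy π) (t : ℕ) (s : S) : M.stateDist π t s ≤ 1 :=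
  M.sum_stateDist hπ t ▸
    Finset.single_le_sum (fun s' _ => M.stateDist_nonneg hπ t s') (Finset.mem_univ s)

theorem summable_disc_pow_mul_stateDist (hπ : IsPolicy π) (s : S) :
    Summable fun t => M.disc ^ t * M.stateDist π t s :=
  (summable_geometric_of_lt_one M.disc_pos.le M.disc_lt_one).of_nonneg_of_le
    (fun t => mul_nonneg (pow_nonneg M.disc_pos.le t) (M.stateDist_nonneg hπ t s))
    (fun t => mul_le_of_le_one_right (pow_nonneg M.disc_pos.le t) (M.stateDist_le_one hπ t s))

theorem occ_nonneg (hπ : IsPolicy π) (s : S) (a : A) : 0 ≤ M.occ π s a :=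
  mul_nonneg (sub_nonneg.2 M.disc_lt_one.le) <| tsum_nonneg fun t =>
    mul_nonneg (mul_nonneg (pow_nonneg M.disc_pos.le t) (M.stateDist_nonneg hπ t s)) (hπ.1 s a)

theorem occ_eq_mul (s : S) (a : A) :
    M.occ π s a = (1 - M.disc) * (∑' t, M.disc ^ t * M.stateDist π t s) * π s a := by
  rw [occ, tsum_mul_right, mul_assoc]

theorem sum_occ_mul_eq_tsum (hπ : IsPolicy π) (h : S → A → ℝ) :
    ∑ s, ∑ a, M.occ π s a * h s a
      = (1 - M.disc) * ∑' t, M.disc ^ t * ∑ s, M.stateDist π t s * vOf π h s := by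
  calc ∑ s, ∑ a, M.occ π s a * h s a
      = (1 - M.disc) * ∑ s, (∑' t, M.disc ^ t * M.stateDist π t s) * vOf π h s := by
        simp only [occ_eq_mul, vOf, Finset.mul_sum, mul_assoc]
    _ = (1 - M.disc) * ∑' t, M.disc ^ t * ∑ s, M.stateDist π t s * vOf π h s := by
        simp only [← tsum_mul_right]
        rw [← Summable.tsum_finsetSum fun s _ =>
          (M.summable_disc_pow_mul_stateDist hπ s).mul_right (vOf π h s)]
        simp only [Finset.mul_sum, mul_assoc]

theorem sum_occ_mul_eq_init_add_nextValue (hπ : IsPolicy π) (h : S → A → ℝ) :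
    ∑ s, ∑ a, M.occ π s a * h s a
      = (1 - M.disc) * ∑ s, M.init s * vOf π h s
        + M.disc * ∑ s, ∑ a, M.occ π s a * M.nextValue π h s a := by
  have hsum : Summable fun t => M.disc ^ t * ∑ s, M.stateDist π t s * vOf π h s := by
    simp only [Finset.mul_sum, ← mul_assoc]
    exact summable_sum fun s _ => (M.summable_disc_pow_mul_stateDist hπ s).mul_right _
  rw [M.sum_occ_mul_eq_tsum hπ h, M.sum_occ_mul_eq_tsum hπ, hsum.tsum_eq_zero_add]
  simp only [sum_stateDist_succ_mul, pow_succ', mul_assoc, tsum_mul_left]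
  simp only [stateDist, pow_zero, one_mul]
  ring

theorem disc_mul_sum_occ_mul_nextValue_le (hπ : IsPolicy π) {h : S → A → ℝ}
    (hh : ∀ s a, 0 ≤ h s a) :
    M.disc * ∑ s, ∑ a, M.occ π s a * M.nextValue π h s a ≤ ∑ s, ∑ a, M.occ π s a * h s a := by
  have hinit : 0 ≤ (1 - M.disc) * ∑ s, M.init s * vOf π h s :=
    mul_nonneg (sub_nonneg.2 M.disc_lt_one.le) <| Finset.sum_nonneg fun s _ =>
      mul_nonneg (M.init_nonneg s) <| Finset.sum_nonneg fun a _ => mul_nonneg (hπ.1 s a) (hh s a)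
  linarith [M.sum_occ_mul_eq_init_add_nextValue hπ h]

end FinMDP

/-- Bellman backup contraction in L2 of the occupancy measure. -/
theorem stmt7 (M : FinMDP S A) (π Q f : S → A → ℝ) (hπ : IsPolicy π) (hQ : M.IsQ π Q) :
    ∑ s, ∑ a, M.occ π s a * (M.bellman π f s a - Q s a) ^ 2
      ≤ M.disc * ∑ s, ∑ a, M.occ π s a * (f s a - Q s a) ^ 2 :=
  calc ∑ s, ∑ a, M.occ π s a * (M.bellman π f s a - Q s a) ^ 2
      = M.disc ^ 2 * ∑ s, ∑ a, M.occ π s a * M.nextValue π (f - Q) s a ^ 2 := by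
        simp only [M.bellman_sub_of_isQ hQ, Finset.mul_sum, mul_pow, mul_left_comm]
    _ ≤ M.disc ^ 2 * ∑ s, ∑ a, M.occ π s a * M.nextValue π ((f - Q) ^ 2) s a := by
        gcongr with s _ a _
        · exact M.occ_nonneg hπ s a
        · exact M.sq_nextValue_le hπ (f - Q) s a
    _ ≤ M.disc * ∑ s, ∑ a, M.occ π s a * (f s a - Q s a) ^ 2 := by
        rw [sq M.disc, mul_assoc]
        gcongr
        · exact M.disc_pos.le
        · exact M.disc_mul_sum_occ_mul_nextValue_le hπ fun s a => sq_nonneg (f s a - Q s a)
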